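/- arXiv:1705.02796 — 4 statements merged into one kernel-verified Lean document; each statement's English description precedes it below -/
import Mathlib

section
/- Determinants as squared overlap determinants: let I ⊆ ℝ be a Borel set such that the index sets J_I(A) := {j ∈ {1,…,M} : a_j ∈ I} and J_I(B) := {k ∈ {1,…,M} : b_k ∈ I} have the same cardinality. Then det(1 − 1_I(A) 1_{I^c}(B) 1_I(A)) = det(1 − 1_{I^c}(A) 1_I(B) 1_{I^c}(A)) = |det((⟨φ_j, ψ_k⟩)_{j ∈ J_I(A), k ∈ J_I(B)})|², where the inner determinant is over the square matrix of overlaps indexed by J_I(A) × J_I(B) with indices in increasing order. -/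
/-!
Let `W = (⟨φ_j, ψ_k⟩)` be the overlap matrix, which is unitary. Conjugating by the unitary with
columns `φ_j` turns `1_I(A)` into the coordinate projection onto `J₁` and `1_{Iᶜ}(B)` into
`W P W*`, with `P` the coordinate projection onto the complement of `J₂`. Compressing to `J₁`
leaves `det(1 - X X*)`, `X` the `J₁ × J₂ᶜ` block of `W`, and orthonormality of the rows of `W`
gives `1 - X X* = S S*`, whence `|det S|²`. The second determinant is the same argument for the
columns of `W`, after `det(1 - Y Y*) = det(1 - Y* Y)`.
-/

open Matrix MeasureTheory
open scoped Classical

/-- The spectral projection `1_I(A)` of a Hermitian matrix with orthonormal eigenbasis `φ`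
and eigenvalues `a`, associated with the set `I ⊆ ℝ`. -/
noncomputable def specProj {M : ℕ} (a : Fin M → ℝ) (φ : Fin M → Fin M → ℂ) (I : Set ℝ) :
    Matrix (Fin M) (Fin M) ℂ :=
  ∑ j : Fin M, if a j ∈ I then Matrix.vecMulVec (φ j) (star (φ j)) else 0

section Compression

variable {ι m n : Type*} [DecidableEq ι] (R : Type*) [CommRing R]

def coordProj (p : ι → Prop) [DecidablePred p] : Matrix ι ι R :=
  diagonal fun i => if p i then 1 else 0

variable {R} [Fintype ι] (p : ι → Prop) [DecidablePred p]

theorem toBlock_mul_coordProj_mul (X : Matrix m ι R) (Y : Matrix ι n R)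
    (r : m → Prop) (s : n → Prop) :
    (X * coordProj R p * Y).toBlock r s = X.toBlock r p * Y.toBlock p s := by
  have hin : (X * coordProj R p).toBlock r p = X.toBlock r p := by
    ext i j
    simp [coordProj, j.2]
  have hout : (X * coordProj R p).toBlock r (fun i => ¬p i) = 0 := by
    ext i j
    simp [coordProj, j.2]
  rw [toBlock_mul_eq_add r p s, hin, hout, Matrix.zero_mul, add_zero]

theorem det_one_sub_coordProj_mul_mul_coordProj (N : Matrix ι ι R) :
    det (1 - coordProj R p * N * coordProj R p) = det (1 - N.toBlock p p) := by
  set K := 1 - coordProj R p * N * coordProj R p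
  have hblock : ∀ i, ¬p i → ∀ j, p j → K i j = 0 := by
    intro i hi j hj
    simp [K, coordProj, hi, show i ≠ j by rintro rfl; exact hi hj]
  have hin : K.toSquareBlockProp p = 1 - N.toBlock p p := by
    ext i j
    simp [K, toSquareBlockProp_def, coordProj, one_apply, Subtype.val_inj, i.2, j.2]
  have hout : K.toSquareBlockProp (fun i => ¬p i) = 1 := by
    ext i j
    simp [K, toSquareBlockProp_def, coordProj, one_apply, Subtype.val_inj, j.2]
  rw [twoBlockTriangular_det K p hblock, hin, hout, det_one, mul_one]

end Compression

theorem conjTranspose_toBlock {m n R : Type*} [Star R] (W : Matrix m n R) (p : m → Prop)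
    (q : n → Prop) : (W.toBlock p q)ᴴ = Wᴴ.toBlock q p :=
  rfl

section Gram

variable {k m n R : Type*} [Fintype k] [DecidableEq k] [Fintype m] [Fintype n] [CommRing R]
  [StarRing R]

theorem det_mul_conjTranspose_submatrix [DecidableEq m] (X : Matrix m n R) (e₁ : k ≃ m)
    (e₂ : k ≃ n) :
    det (X * Xᴴ) = det (X.submatrix e₁ e₂ * (X.submatrix e₁ e₂)ᴴ) := by
  rw [← det_submatrix_equiv_self e₁, ← submatrix_mul_equiv X Xᴴ e₁ e₂ e₁,
    ← conjTranspose_submatrix]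

theorem det_conjTranspose_mul_submatrix [DecidableEq n] (X : Matrix m n R) (e₁ : k ≃ m)
    (e₂ : k ≃ n) :
    det (Xᴴ * X) = det ((X.submatrix e₁ e₂)ᴴ * X.submatrix e₁ e₂) := by
  rw [← det_submatrix_equiv_self e₂, ← submatrix_mul_equiv Xᴴ X e₂ e₁ e₂,
    ← conjTranspose_submatrix]

end Gram

section Unitary

variable {ι R : Type*} [Fintype ι] [DecidableEq ι] [CommRing R] [StarRing R]
  {W : Matrix ι ι R}

theorem det_one_sub_unitary_conj {U : Matrix ι ι R} (hU : U ∈ unitaryGroup ι R)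
    (X : Matrix ι ι R) : det (1 - U * X * Uᴴ) = det (1 - X) := by
  rw [det_one_sub_mul_comm, ← Matrix.mul_assoc, ← star_eq_conjTranspose,
    Unitary.star_mul_self_of_mem hU, Matrix.one_mul]

theorem one_sub_toBlock_not_mul_conjTranspose (hW : W ∈ unitaryGroup ι R) (p q : ι → Prop)
    [DecidablePred q] :
    1 - W.toBlock p (fun i => ¬q i) * (W.toBlock p fun i => ¬q i)ᴴ =
      W.toBlock p q * (W.toBlock p q)ᴴ := by
  have hrows := toBlock_mul_eq_add p q p W Wᴴ
  rw [← star_eq_conjTranspose, Unitary.mul_star_self_of_mem hW, toBlock_one_self] at hrows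
  rw [conjTranspose_toBlock, conjTranspose_toBlock, ← star_eq_conjTranspose, hrows,
    add_sub_cancel_right]

variable {k : Type*} [Fintype k] [DecidableEq k] (p q : ι → Prop) [DecidablePred p]
  [DecidablePred q]

theorem det_one_sub_coordProj_mul_conj_not_mul_coordProj (hW : W ∈ unitaryGroup ι R)
    (e₁ : k ≃ {i // p i}) (e₂ : k ≃ {i // q i}) :
    det (1 - coordProj R p * (W * coordProj R (fun i => ¬q i) * Wᴴ) * coordProj R p) =
      det ((W.toBlock p q).submatrix e₁ e₂ * ((W.toBlock p q).submatrix e₁ e₂)ᴴ) := by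
  rw [det_one_sub_coordProj_mul_mul_coordProj, toBlock_mul_coordProj_mul,
    ← conjTranspose_toBlock, one_sub_toBlock_not_mul_conjTranspose hW,
    det_mul_conjTranspose_submatrix _ e₁ e₂]

theorem det_one_sub_coordProj_not_mul_conj_mul_coordProj_not (hW : W ∈ unitaryGroup ι R)
    (e₁ : k ≃ {i // p i}) (e₂ : k ≃ {i // q i}) :
    det (1 - coordProj R (fun i => ¬p i) * (W * coordProj R q * Wᴴ) *
        coordProj R (fun i => ¬p i)) =
      det (((W.toBlock p q).submatrix e₁ e₂)ᴴ * (W.toBlock p q).submatrix e₁ e₂) := by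
  have hcols := one_sub_toBlock_not_mul_conjTranspose (Unitary.star_mem hW) q p
  simp only [star_eq_conjTranspose, conjTranspose_toBlock, conjTranspose_conjTranspose] at hcols
  rw [det_one_sub_coordProj_mul_mul_coordProj, toBlock_mul_coordProj_mul, det_one_sub_mul_comm,
    hcols, ← conjTranspose_toBlock, det_conjTranspose_mul_submatrix _ e₁ e₂]

end Unitary

theorem det_mul_conjTranspose_self {k : Type*} [Fintype k] [DecidableEq k]
    (S : Matrix k k ℂ) : det (S * Sᴴ) = (‖det S‖ ^ 2 : ℝ) := by
  rw [det_mul, det_conjTranspose, Complex.star_def, Complex.mul_conj, Complex.normSq_eq_norm_sq]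

section Overlap

variable {ι R : Type*} [Fintype ι] [CommRing R] [StarRing R]

def overlap (φ ψ : ι → ι → R) : Matrix ι ι R :=
  of fun j k => star (φ j) ⬝ᵥ ψ k

theorem overlap_eq (φ ψ : ι → ι → R) : overlap φ ψ = (of φ)ᵀᴴ * (of ψ)ᵀ := by
  ext j k
  simp [overlap, mul_apply, dotProduct]

variable [DecidableEq ι]

theorem transpose_of_mem_unitaryGroup {φ : ι → ι → R}
    (hφ : ∀ j k, star (φ j) ⬝ᵥ φ k = if j = k then 1 else 0) :
    (of φ)ᵀ ∈ unitaryGroup ι R := by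
  rw [mem_unitaryGroup_iff']
  ext j k
  simpa [mul_apply, dotProduct, one_apply] using hφ j k

theorem overlap_mem_unitaryGroup {φ ψ : ι → ι → R}
    (hφ : ∀ j k, star (φ j) ⬝ᵥ φ k = if j = k then 1 else 0)
    (hψ : ∀ j k, star (ψ j) ⬝ᵥ ψ k = if j = k then 1 else 0) :
    overlap φ ψ ∈ unitaryGroup ι R := by
  rw [overlap_eq, ← star_eq_conjTranspose]
  exact mul_mem (Unitary.star_mem (transpose_of_mem_unitaryGroup hφ))
    (transpose_of_mem_unitaryGroup hψ)

end Overlap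

section SpectralProjection

variable {M : ℕ}

theorem specProj_eq_conj (a : Fin M → ℝ) (φ : Fin M → Fin M → ℂ) (I : Set ℝ)
    (p : Fin M → Prop) [DecidablePred p] (hp : ∀ j, p j ↔ a j ∈ I) :
    specProj a φ I = (of φ)ᵀ * coordProj ℂ p * (of φ)ᵀᴴ := by
  ext i k
  rw [mul_apply, specProj, Matrix.sum_apply]
  refine Finset.sum_congr rfl fun j _ => ?_
  by_cases h : p j <;> simp [coordProj, mul_diagonal, vecMulVec_apply, h, ← hp]

theorem det_one_sub_specProj_mul_specProj_mul_specProj {a b : Fin M → ℝ}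
    {φ ψ : Fin M → Fin M → ℂ} (hφ : ∀ j k, star (φ j) ⬝ᵥ φ k = if j = k then 1 else 0)
    {I₁ I₂ : Set ℝ} (p q : Fin M → Prop) [DecidablePred p] [DecidablePred q]
    (hp : ∀ j, p j ↔ a j ∈ I₁) (hq : ∀ k, q k ↔ b k ∈ I₂) :
    det (1 - specProj a φ I₁ * specProj b ψ I₂ * specProj a φ I₁) =
      det (1 - coordProj ℂ p * (overlap φ ψ * coordProj ℂ q * (overlap φ ψ)ᴴ) *
        coordProj ℂ p) := by
  rw [specProj_eq_conj a φ I₁ p hp, specProj_eq_conj b ψ I₂ q hq, overlap_eq,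
    ← det_one_sub_unitary_conj (transpose_of_mem_unitaryGroup hφ)
      (coordProj ℂ p * _ * coordProj ℂ p)]
  simp only [conjTranspose_mul, conjTranspose_conjTranspose, Matrix.mul_assoc]

end SpectralProjection

theorem det_eq_overlap_det_sq_general
    (M : ℕ)
    (a b : Fin M → ℝ)
    (φ ψ : Fin M → Fin M → ℂ)
    (hφortho : ∀ j k, star (φ j) ⬝ᵥ φ k = (if j = k then (1 : ℂ) else 0))
    (hψortho : ∀ j k, star (ψ j) ⬝ᵥ ψ k = (if j = k then (1 : ℂ) else 0))
    (I : Set ℝ)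
    (J₁ J₂ : Finset (Fin M))
    (hJ₁ : ∀ j, j ∈ J₁ ↔ a j ∈ I) (hJ₂ : ∀ k, k ∈ J₂ ↔ b k ∈ I)
    (n : ℕ) (h₁ : J₁.card = n) (h₂ : J₂.card = n)
    (S : Matrix (Fin n) (Fin n) ℂ)
    (hS : ∀ j k, S j k = star (φ (J₁.orderIsoOfFin h₁ j).1) ⬝ᵥ ψ (J₂.orderIsoOfFin h₂ k).1) :
    Matrix.det (1 - specProj a φ I * specProj b ψ Iᶜ * specProj a φ I) =
      Matrix.det (1 - specProj a φ Iᶜ * specProj b ψ I * specProj a φ Iᶜ) ∧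
    Matrix.det (1 - specProj a φ I * specProj b ψ Iᶜ * specProj a φ I) =
      ((‖S.det‖ ^ 2 : ℝ) : ℂ) := by
  have hW := overlap_mem_unitaryGroup hφortho hψortho
  set e₁ := (J₁.orderIsoOfFin h₁).toEquiv
  set e₂ := (J₂.orderIsoOfFin h₂).toEquiv
  have hS' : S = ((overlap φ ψ).toBlock (· ∈ J₁) (· ∈ J₂)).submatrix e₁ e₂ := by
    ext j k
    exact hS j k
  have hI : det (1 - specProj a φ I * specProj b ψ Iᶜ * specProj a φ I) =
      ((‖S.det‖ ^ 2 : ℝ) : ℂ) := by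
    rw [det_one_sub_specProj_mul_specProj_mul_specProj hφortho (· ∈ J₁) (· ∉ J₂) hJ₁
      (by simp [hJ₂]), det_one_sub_coordProj_mul_conj_not_mul_coordProj _ _ hW e₁ e₂, ← hS',
      det_mul_conjTranspose_self]
  have hIc : det (1 - specProj a φ Iᶜ * specProj b ψ I * specProj a φ Iᶜ) =
      ((‖S.det‖ ^ 2 : ℝ) : ℂ) := by
    rw [det_one_sub_specProj_mul_specProj_mul_specProj hφortho (· ∉ J₁) (· ∈ J₂)
      (by simp [hJ₁]) hJ₂, det_one_sub_coordProj_not_mul_conj_mul_coordProj_not _ _ hW e₁ e₂,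
      ← hS', det_mul_comm, det_mul_conjTranspose_self]
  exact ⟨hI.trans hIc.symm, hI⟩

/-- **Determinants as squared overlap determinants.** Let `B = A + v v*` with `v` cyclic for
the Hermitian matrix `A`, with eigenvalues `a`, `b` (ordered, with multiplicity) and orthonormal
eigenbases `φ`, `ψ`. Let `I ⊆ ℝ` be a Borel set such that the index sets
`J₁ = {j : a j ∈ I}` and `J₂ = {k : b k ∈ I}` have the same cardinality `n`, and let
`S` be the `n × n` matrix of overlaps `⟨φ_j, ψ_k⟩`, `j ∈ J₁`, `k ∈ J₂`, with the indices in
increasing order. Then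
`det(1 - 1_I(A) 1_{Iᶜ}(B) 1_I(A)) = det(1 - 1_{Iᶜ}(A) 1_I(B) 1_{Iᶜ}(A)) = |det S|²`. -/
theorem det_eq_overlap_det_sq
    (M : ℕ) (hM : 1 ≤ M)
    (A : Matrix (Fin M) (Fin M) ℂ) (hA : A.IsHermitian)
    (v : Fin M → ℂ)
    (hcyc : Submodule.span ℂ (Set.range fun k : Fin M => (A ^ (k : ℕ)) *ᵥ v) = ⊤)
    (B : Matrix (Fin M) (Fin M) ℂ) (hB : B = A + Matrix.vecMulVec v (star v))
    (a b : Fin M → ℝ) (hamono : Monotone a) (hbmono : Monotone b)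
    (φ ψ : Fin M → Fin M → ℂ)
    (hφortho : ∀ j k, star (φ j) ⬝ᵥ φ k = (if j = k then (1 : ℂ) else 0))
    (hψortho : ∀ j k, star (ψ j) ⬝ᵥ ψ k = (if j = k then (1 : ℂ) else 0))
    (hφeig : ∀ j, A *ᵥ φ j = (a j : ℂ) • φ j)
    (hψeig : ∀ k, B *ᵥ ψ k = (b k : ℂ) • ψ k)
    (I : Set ℝ) (hImeas : MeasurableSet I)
    (J₁ J₂ : Finset (Fin M))
    (hJ₁ : ∀ j, j ∈ J₁ ↔ a j ∈ I) (hJ₂ : ∀ k, k ∈ J₂ ↔ b k ∈ I)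
    (n : ℕ) (h₁ : J₁.card = n) (h₂ : J₂.card = n)
    (S : Matrix (Fin n) (Fin n) ℂ)
    (hS : ∀ j k, S j k = star (φ (J₁.orderIsoOfFin h₁ j).1) ⬝ᵥ ψ (J₂.orderIsoOfFin h₂ k).1) :
    Matrix.det (1 - specProj a φ I * specProj b ψ Iᶜ * specProj a φ I) =
      Matrix.det (1 - specProj a φ Iᶜ * specProj b ψ I * specProj a φ Iᶜ) ∧
    Matrix.det (1 - specProj a φ I * specProj b ψ Iᶜ * specProj a φ I) =
      ((‖S.det‖ ^ 2 : ℝ) : ℂ) :=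
  det_eq_overlap_det_sq_general M a b φ ψ hφortho hψortho I J₁ J₂ hJ₁ hJ₂ n h₁ h₂ S hS
end

section
/- Product formula for the squared overlap determinant: let N ≤ M and let J_1 = {l_1 < l_2 < … < l_N} and J_2 = {m_1 < m_2 < … < m_N} be subsets of {1,…,M} of cardinality N; let (l_k)_{k=N+1}^M enumerate {1,…,M} \ J_1 and (m_k)_{k=N+1}^M enumerate {1,…,M} \ J_2. Then |det((⟨φ_{l_j}, ψ_{m_k}⟩)_{1≤j,k≤N})|² = ∏_{j=1}^N ∏_{k=N+1}^M (|b_{m_k} − a_{l_j}| · |a_{l_k} − b_{m_j}|) / (|a_{l_k} − a_{l_j}| · |b_{m_k} − b_{m_j}|). -/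
/-!
The secular relation `(b_k - a_j) ⟨φ_j, ψ_k⟩ = ⟨φ_j, v⟩ ⟨v, ψ_k⟩` exhibits the overlap matrix as
the Cauchy matrix `((a_j - b_k)⁻¹)` with rescaled rows and columns. Expanding `⟨v, ψ_k⟩` in the
basis `(φ_j)` turns it into the secular equation `∑_j |⟨φ_j, v⟩|² / (b_k - a_j) = 1` for every `k`,
which partial fractions solve: `|⟨φ_j, v⟩|² = ∏_k |b_k - a_j| / ∏_{k ≠ j} |a_k - a_j|`, and
symmetrically for `|⟨ψ_k, v⟩|²` since `A = B - v v*`. By Cauchy's determinant formula, the factors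
of these weights with both indices in `J` cancel exactly against the squared Cauchy minor, leaving
the product over `J × Jᶜ`. Cyclicity of `v` keeps every overlap with `v` nonzero, hence the two
spectra simple and disjoint, so no denominator vanishes.
-/

open Matrix Finset Polynomial

theorem prod_prod_erase_eq_prod_prod_Ioi_mul {ι M : Type*} [CommMonoid M] [Fintype ι]
    [LinearOrder ι] [LocallyFiniteOrderTop ι] [LocallyFiniteOrderBot ι]
    (f : ι → ι → M) :
    ∏ i, ∏ j ∈ univ.erase i, f i j = ∏ i, ∏ j ∈ Ioi i, f i j * f j i := by
  have herase : ∀ i : ι, univ.erase i = Ioi i ∪ Iio i := fun i => by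
    ext j; simp [lt_or_lt_iff_ne, ne_comm]
  have hswap : ∏ i, ∏ j ∈ Iio i, f i j = ∏ i, ∏ j ∈ Ioi i, f j i :=
    prod_comm' fun i j => by simp
  simp_rw [prod_mul_distrib, ← hswap, ← prod_mul_distrib]
  refine prod_congr rfl fun i _ => ?_
  rw [herase, prod_union (disjoint_left.2 fun j hj hj' => by simp_all; order)]

theorem det_cauchy {F : Type*} [Field F] {n : ℕ} (x y : Fin n → F) (hxy : ∀ i j, x i ≠ y j)
    (hy : Function.Injective y) :
    det (of fun i j => (x i - y j)⁻¹) =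
      (∏ i, ∏ j ∈ Ioi i, (x j - x i) * (y i - y j)) / ∏ i, ∏ j, (x i - y j) := by
  -- `Q` is the coefficient matrix of the `P j`: `vandermonde z * Q = (P j (z i))`, which is
  -- diagonal for `z = y` and a row rescaling of the Cauchy matrix for `z = x`.
  let P : Fin n → F[X] := fun j => Lagrange.nodal (univ.erase j) y
  let Q : Matrix (Fin n) (Fin n) F := of fun r j => (P j).coeff r
  have hVQ : ∀ z, vandermonde z * Q = of fun i j => (P j).eval (z i) := by
    intro z; ext i j
    have hdeg : (P j).natDegree < n := by
      rw [Lagrange.natDegree_nodal, card_erase_of_mem (mem_univ j), card_univ, Fintype.card_fin]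
      exact Nat.sub_lt j.pos one_pos
    rw [mul_apply, of_apply, eval_eq_sum_range' hdeg, ← Fin.sum_univ_eq_sum_range]
    exact sum_congr rfl fun r _ => by simp [vandermonde_apply, Q, mul_comm]
  have hVyQ : vandermonde y * Q = diagonal fun j => ∏ k ∈ univ.erase j, (y j - y k) := by
    rw [hVQ]; ext i j
    rcases eq_or_ne i j with rfl | hij
    · simp [P, Lagrange.eval_nodal]
    · rw [diagonal_apply_ne _ hij, of_apply,
        Lagrange.eval_nodal_at_node (mem_erase.2 ⟨hij, mem_univ i⟩)]
  have hC : (of fun i j => (x i - y j)⁻¹) =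
      diagonal (fun i => (∏ k, (x i - y k))⁻¹) * (vandermonde x * Q) := by
    rw [hVQ]; ext i j
    rw [diagonal_mul, of_apply, of_apply, Lagrange.eval_nodal, ← mul_prod_erase _ _ (mem_univ j),
      mul_inv, mul_assoc, inv_mul_cancel₀ (prod_ne_zero_iff.2 fun k _ => sub_ne_zero.2 (hxy i k)),
      mul_one]
  have hQ : det Q = ∏ j, ∏ k ∈ Ioi j, (y j - y k) := by
    have h := congrArg det hVyQ
    rw [det_mul, det_diagonal, prod_prod_erase_eq_prod_prod_Ioi_mul, det_vandermonde] at h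
    simp_rw [prod_mul_distrib] at h
    have hV := det_vandermonde_ne_zero_iff.2 hy
    rw [det_vandermonde] at hV
    exact mul_right_cancel₀ hV ((mul_comm _ _).trans h)
  rw [hC, det_mul, det_mul, det_diagonal, det_vandermonde, hQ, prod_inv_distrib]
  simp_rw [prod_mul_distrib]
  rw [div_eq_mul_inv]
  ring

theorem det_cauchy_sq {F : Type*} [Field F] {n : ℕ} (x y : Fin n → F) (hxy : ∀ i j, x i ≠ y j)
    (hy : Function.Injective y) :
    det (of fun i j => (x i - y j)⁻¹) ^ 2 =
      (∏ i, ∏ k ∈ univ.erase i, (x k - x i) * (y k - y i)) /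
        ∏ i, ∏ k, (x i - y k) * (x k - y i) := by
  rw [det_cauchy x y hxy hy, div_pow, prod_prod_erase_eq_prod_prod_Ioi_mul]
  congr 1
  · rw [← prod_pow]
    exact prod_congr rfl fun i _ => by rw [← prod_pow]; exact prod_congr rfl fun k _ => by ring
  · simp_rw [prod_mul_distrib]
    rw [prod_comm (f := fun i k => x k - y i), sq]

theorem norm_det_scaled_cauchy_sq {𝕜 : Type*} [RCLike 𝕜] {n : ℕ} (c d : Fin n → 𝕜)
    (x y : Fin n → ℝ) (hxy : ∀ i j, x i ≠ y j) (hy : Function.Injective y) :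
    ‖det (of fun i j => c i * d j * ((x i : 𝕜) - y j)⁻¹)‖ ^ 2 =
      ∏ i, ‖c i‖ ^ 2 * ‖d i‖ ^ 2 *
        ((∏ k ∈ univ.erase i, |x k - x i| * |y k - y i|) / ∏ k, |y k - x i| * |x k - y i|) := by
  have hdet : det (of fun i j => c i * d j * ((x i : 𝕜) - y j)⁻¹) =
      (∏ i, c i) * ((∏ j, d j) * det (of fun i j => ((x i : 𝕜) - y j)⁻¹)) := by
    rw [← det_mul_row, ← det_mul_column]
    congr 1; ext i j; simp [mul_assoc]
  have hcauchy := det_cauchy_sq (fun i => (x i : 𝕜)) (fun j => (y j : 𝕜))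
    (fun i j => by exact_mod_cast hxy i j) (fun i j h => hy (RCLike.ofReal_injective h))
  rw [hdet, norm_mul, norm_mul, mul_pow, mul_pow, ← norm_pow (det _), hcauchy]
  simp only [norm_div, norm_prod, norm_mul, ← RCLike.ofReal_sub, RCLike.norm_ofReal]
  rw [prod_mul_distrib, prod_mul_distrib, prod_pow, prod_pow, prod_div_distrib]
  simp_rw [abs_sub_comm (x _) (y _)]
  ring

theorem prod_div_prod_erase_mul_prod_div_prod_erase {F α : Type*} [Field F] [Fintype α]
    [DecidableEq α] {f g h l : α → F} {P : Finset α} {i : α} (hi : i ∈ P)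
    (hf : ∀ k ∈ P, f k ≠ 0) (hh : ∀ k ∈ P, h k ≠ 0)
    (hg : ∀ k, k ≠ i → g k ≠ 0) (hl : ∀ k, k ≠ i → l k ≠ 0) :
    ((∏ k, f k) / ∏ k ∈ univ.erase i, g k) * ((∏ k, h k) / ∏ k ∈ univ.erase i, l k) *
        ((∏ k ∈ P.erase i, g k * l k) / ∏ k ∈ P, f k * h k) =
      ∏ k ∈ Pᶜ, f k * h k / (g k * l k) := by
  have herase : ∀ u : α → F, ∏ k ∈ univ.erase i, u k = (∏ k ∈ P.erase i, u k) * ∏ k ∈ Pᶜ, u k :=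
    fun u => by
      rw [← prod_union (disjoint_left.2 fun k hk hk' => by simp_all)]
      congr 1; ext k; by_cases hk : k ∈ P <;> simp [hk]; rintro rfl; contradiction
  have hoff : ∀ {u : α → F}, (∀ k, k ≠ i → u k ≠ 0) →
      (∏ k ∈ P.erase i, u k) ≠ 0 ∧ ∏ k ∈ Pᶜ, u k ≠ 0 := fun hu =>
    ⟨prod_ne_zero_iff.2 fun k hk => hu k (ne_of_mem_erase hk),
      prod_ne_zero_iff.2 fun k hk => hu k (by rintro rfl; exact (mem_compl.1 hk) hi)⟩
  obtain ⟨hgP, hgQ⟩ := hoff hg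
  obtain ⟨hlP, hlQ⟩ := hoff hl
  have hfP : ∏ k ∈ P, f k ≠ 0 := prod_ne_zero_iff.2 hf
  have hhP : ∏ k ∈ P, h k ≠ 0 := prod_ne_zero_iff.2 hh
  rw [← prod_mul_prod_compl P f, ← prod_mul_prod_compl P h, herase g, herase l,
    prod_mul_distrib, prod_mul_distrib, prod_div_distrib, prod_mul_distrib, prod_mul_distrib]
  field_simp

theorem norm_sq_det_eq_prod_of_norm_sq_eq {𝕜 n : Type*} [RCLike 𝕜] [Fintype n] [DecidableEq n]
    {x y : n → ℝ} (hx : Function.Injective x) (hy : Function.Injective y)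
    (hxy : ∀ j k, x j ≠ y k) {c d : n → 𝕜}
    (hc : ∀ i, ‖c i‖ ^ 2 = (∏ k, |y k - x i|) / ∏ k ∈ univ.erase i, |x k - x i|)
    (hd : ∀ i, ‖d i‖ ^ 2 = (∏ k, |x k - y i|) / ∏ k ∈ univ.erase i, |y k - y i|)
    {N : ℕ} (e : Fin N ↪ n) :
    ‖det (of fun j k : Fin N => c (e j) * d (e k) * ((x (e j) : 𝕜) - y (e k))⁻¹)‖ ^ 2 =
      ∏ i ∈ univ.map e, ∏ k ∈ (univ.map e)ᶜ,
        |y k - x i| * |x k - y i| / (|x k - x i| * |y k - y i|) := by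
  rw [norm_det_scaled_cauchy_sq (fun j => c (e j)) (fun k => d (e k)) (fun j => x (e j))
    (fun k => y (e k)) (fun _ _ => hxy _ _) (hy.comp e.injective), prod_map]
  refine prod_congr rfl fun i _ => ?_
  have herase : ∀ f : n → ℝ, ∏ k ∈ univ.erase i, f (e k) = ∏ k ∈ (univ.map e).erase (e i), f k :=
    fun f => by rw [← map_erase, prod_map]
  rw [hc, hd,
    herase (fun k => |x k - x (e i)| * |y k - y (e i)|),
    ← prod_map univ e (fun k => |y k - x (e i)| * |x k - y (e i)|)]
  exact prod_div_prod_erase_mul_prod_div_prod_erase (mem_map_of_mem e (mem_univ i))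
    (fun k _ => abs_ne_zero.2 (sub_ne_zero.2 (hxy _ _).symm))
    (fun k _ => abs_ne_zero.2 (sub_ne_zero.2 (hxy _ _)))
    (fun k hk => abs_ne_zero.2 (sub_ne_zero.2 (hx.ne hk)))
    (fun k hk => abs_ne_zero.2 (sub_ne_zero.2 (hy.ne hk)))

theorem mul_prod_erase_eq_of_forall_sum_div_eq {F ι : Type*} [Field F] [Fintype ι]
    [DecidableEq ι] (x y γ : ι → F) (ε : F) (hy : Function.Injective y)
    (hxy : ∀ i j, y i ≠ x j) (hsum : ∀ i, ∑ j, γ j / (y i - x j) = ε) (i : ι) :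
    γ i * ∏ k ∈ univ.erase i, (x i - x k) = -ε * ∏ k, (x i - y k) := by
  -- `D` has degree `< #ι` and vanishes at every `y i`, hence is zero; then evaluate at `x i`.
  let D : F[X] := ε • (Lagrange.nodal univ y - Lagrange.nodal univ x) +
    ∑ j, γ j • Lagrange.nodal (univ.erase j) x
  have hdeg : D.degree < #(univ : Finset ι) := by
    refine (degree_add_le _ _).trans_lt (max_lt ?_ ?_)
    · refine (degree_smul_le _ _).trans_lt ?_
      rw [← Lagrange.degree_nodal (v := y)]
      exact degree_sub_lt_left (by simp [Lagrange.degree_nodal]) Lagrange.nodal_ne_zero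
        (by simp [Lagrange.nodal_monic.leadingCoeff])
    · refine (degree_sum_le _ _).trans_lt
        ((Finset.sup_lt_iff (WithBot.bot_lt_coe _)).2 fun j _ => ?_)
      refine (degree_smul_le _ _).trans_lt ?_
      rw [Lagrange.degree_nodal, card_erase_of_mem (mem_univ j)]
      exact WithBot.coe_lt_coe.2 (Nat.sub_lt (card_pos.2 ⟨i, mem_univ i⟩) one_pos)
  have hroots : ∀ t ∈ (univ : Finset ι), D.eval (y t) = 0 := by
    intro t ht
    have hterm : ∀ j, γ j * ∏ k ∈ univ.erase j, (y t - x k) =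
        γ j / (y t - x j) * ∏ k, (y t - x k) := fun j => by
      rw [← mul_prod_erase _ _ (mem_univ j)]
      field_simp [sub_ne_zero.2 (hxy t j)]
    simp only [D, eval_add, eval_smul, eval_sub, eval_finsetSum, Lagrange.eval_nodal_at_node ht,
      smul_eq_mul, Lagrange.eval_nodal, hterm, ← sum_mul, hsum]
    ring
  have hD : D = 0 := eq_zero_of_degree_lt_of_eval_index_eq_zero _ hy.injOn hdeg hroots
  have h := congrArg (eval (x i)) hD
  simp only [D, eval_add, eval_smul, eval_sub, eval_finsetSum, smul_eq_mul,
    Lagrange.eval_nodal_at_node (mem_univ i), Lagrange.eval_nodal, eval_zero] at h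
  rw [sum_eq_single i (fun j _ hji => by
    rw [prod_eq_zero (mem_erase.2 ⟨hji.symm, mem_univ i⟩) (sub_self (x i)), mul_zero])
    (by simp)] at h
  linear_combination h

section CyclicVector

variable {R n : Type*} [CommRing R] [Fintype n] [DecidableEq n]

def IsCyclicVector (A : Matrix n n R) (v : n → R) : Prop :=
  Submodule.span R (Set.range fun k : ℕ => (A ^ k) *ᵥ v) = ⊤

theorem isCyclicVector_of_span_fin_eq_top {m : ℕ} {A : Matrix n n R} {v : n → R}
    (h : Submodule.span R (Set.range fun k : Fin m => (A ^ (k : ℕ)) *ᵥ v) = ⊤) :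
    IsCyclicVector A v :=
  eq_top_mono (Submodule.span_mono (Set.range_subset_iff.2 fun k : Fin m => ⟨(k : ℕ), rfl⟩)) h

namespace IsCyclicVector

variable {A : Matrix n n R} {v : n → R}

theorem eq_zero_of_vecMul_eq_smul (hv : IsCyclicVector A v) {u : n → R} {μ : R}
    (hu : u ᵥ* A = μ • u) (huv : u ⬝ᵥ v = 0) : u = 0 := by
  have hpow : ∀ k : ℕ, u ⬝ᵥ (A ^ k) *ᵥ v = 0 := fun k => by
    induction k with
    | zero => simpa using huv
    | succ k ih =>
      rw [pow_succ', ← mulVec_mulVec, dotProduct_mulVec, hu, smul_dotProduct, ih, smul_zero]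
  have hall : ∀ x, u ⬝ᵥ x = 0 := fun x => by
    have hx : x ∈ Submodule.span R (Set.range fun k : ℕ => (A ^ k) *ᵥ v) := hv ▸ Submodule.mem_top
    induction hx using Submodule.span_induction with
    | mem x hx => obtain ⟨k, rfl⟩ := hx; exact hpow k
    | zero => exact dotProduct_zero u
    | add x y _ _ hx hy => rw [dotProduct_add, hx, hy, add_zero]
    | smul c x _ hx => rw [dotProduct_smul, hx, smul_zero]
  funext i
  simpa using hall (Pi.single i 1)

theorem add_vecMulVec (hv : IsCyclicVector A v) (w : n → R) :
    IsCyclicVector (A + vecMulVec v w) v := by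
  set S := Submodule.span R (Set.range fun k : ℕ => ((A + vecMulVec v w) ^ k) *ᵥ v)
  have hvS : v ∈ S := Submodule.subset_span ⟨0, by simp⟩
  have hBS : ∀ x ∈ S, (A + vecMulVec v w) *ᵥ x ∈ S := fun x hx => by
    induction hx using Submodule.span_induction with
    | mem x hx =>
      obtain ⟨k, rfl⟩ := hx
      exact Submodule.subset_span ⟨k + 1, by dsimp only; rw [pow_succ', mulVec_mulVec]⟩
    | zero => simp
    | add x y _ _ hx hy => rw [mulVec_add]; exact S.add_mem hx hy
    | smul c x _ hx => rw [mulVec_smul]; exact S.smul_mem c hx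
  -- `A = B - v wᵀ` maps `S` into itself because `S` contains `v`.
  have hAS : ∀ x ∈ S, A *ᵥ x ∈ S := fun x hx => by
    have hA : A *ᵥ x = (A + vecMulVec v w) *ᵥ x - (w ⬝ᵥ x) • v := by
      rw [add_mulVec, vecMulVec_mulVec, op_smul_eq_smul, add_sub_cancel_right]
    rw [hA]
    exact S.sub_mem (hBS x hx) (S.smul_mem _ hvS)
  refine eq_top_iff.2 (hv ▸ Submodule.span_le.2 (Set.range_subset_iff.2 fun k => ?_))
  induction k with
  | zero => simpa using hvS
  | succ k ih => rw [pow_succ', ← mulVec_mulVec]; exact hAS _ ih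

theorem injective_of_vecMul_eq_smul [Nontrivial R] (hv : IsCyclicVector A v) {u χ : n → n → R}
    (huχ : ∀ j k, u j ⬝ᵥ χ k = if j = k then 1 else 0) {μ : n → R}
    (hu : ∀ j, u j ᵥ* A = μ j • u j) : Function.Injective μ := by
  intro i j hij
  by_contra hne
  have hne_zero : ∀ k, u k ⬝ᵥ v ≠ 0 := fun k hk => by
    simpa [hv.eq_zero_of_vecMul_eq_smul (hu k) hk] using huχ k k
  -- this combination is a left eigenvector orthogonal to `v`, hence zero
  have hw := hv.eq_zero_of_vecMul_eq_smul (u := (u j ⬝ᵥ v) • u i - (u i ⬝ᵥ v) • u j) (μ := μ i)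
    (by rw [sub_vecMul, smul_vecMul, smul_vecMul, hu, hu, hij, smul_sub, smul_comm (μ j),
      smul_comm (μ j)])
    (by rw [sub_dotProduct, smul_dotProduct, smul_dotProduct, smul_eq_mul, smul_eq_mul, mul_comm,
      sub_self])
  apply hne_zero j
  simpa [sub_dotProduct, huχ, Ne.symm hne] using congrArg (· ⬝ᵥ χ i) hw

end IsCyclicVector

end CyclicVector

section RankOne

variable {R n : Type*} [CommRing R] [Fintype n]

theorem sub_mul_dotProduct_of_add_vecMulVec {A : Matrix n n R} {u x v w : n → R} {α β : R}
    (hu : u ᵥ* A = α • u) (hx : (A + vecMulVec v w) *ᵥ x = β • x) :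
    (β - α) * (u ⬝ᵥ x) = (u ⬝ᵥ v) * (w ⬝ᵥ x) := by
  have h := congrArg (u ⬝ᵥ ·) hx
  simp only [add_mulVec, dotProduct_add, dotProduct_mulVec, hu, vecMulVec_mulVec,
    op_smul_eq_smul, smul_dotProduct, dotProduct_smul, smul_eq_mul] at h
  linear_combination -h

variable [DecidableEq n] [StarRing R]

theorem dotProduct_eq_sum_of_orthonormal {χ : n → n → R}
    (hχ : ∀ j k, star (χ j) ⬝ᵥ χ k = if j = k then 1 else 0) (u x : n → R) :
    u ⬝ᵥ x = ∑ j, (u ⬝ᵥ χ j) * (star (χ j) ⬝ᵥ x) := by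
  let W : Matrix n n R := of fun j => star (χ j)
  have hWW : W * Wᴴ = 1 := by
    ext j k; simpa [W, mul_apply, one_apply, dotProduct] using hχ j k
  calc u ⬝ᵥ x = u ⬝ᵥ (Wᴴ * W) *ᵥ x := by rw [mul_eq_one_comm.1 hWW, one_mulVec]
    _ = (u ᵥ* Wᴴ) ⬝ᵥ (W *ᵥ x) := by rw [← mulVec_mulVec, dotProduct_mulVec]
    _ = _ := by simp [dotProduct, vecMul, mulVec, W]

theorem sum_dotProduct_mul_div_sub_eq_one {K : Type*} [Field K] [StarRing K]
    {A : Matrix n n K} {χ : n → n → K}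
    (hχ : ∀ j k, star (χ j) ⬝ᵥ χ k = if j = k then 1 else 0) {μ : n → K}
    (hχA : ∀ j, star (χ j) ᵥ* A = μ j • star (χ j)) {v w x : n → K} {β : K}
    (hx : (A + vecMulVec v w) *ᵥ x = β • x) (hwx : w ⬝ᵥ x ≠ 0) (hβ : ∀ j, β - μ j ≠ 0) :
    ∑ j, (w ⬝ᵥ χ j) * (star (χ j) ⬝ᵥ v) / (β - μ j) = 1 := by
  refine mul_right_cancel₀ hwx ?_
  rw [one_mul, sum_mul]
  conv_rhs => rw [dotProduct_eq_sum_of_orthonormal hχ w x]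
  refine sum_congr rfl fun j _ => ?_
  have h := sub_mul_dotProduct_of_add_vecMulVec (hχA j) hx
  field_simp [hβ j]
  linear_combination -(w ⬝ᵥ χ j) * h

theorem norm_dotProduct_mul_dotProduct_eq_prod_div_prod {𝕜 : Type*} [RCLike 𝕜]
    {H : Matrix n n 𝕜} {χ χ' : n → n → 𝕜}
    (hχ : ∀ j k, star (χ j) ⬝ᵥ χ k = if j = k then 1 else 0) {μ ν : n → ℝ}
    (hμ : Function.Injective μ) (hν : Function.Injective ν) (hμν : ∀ j k, μ j ≠ ν k)
    (hχH : ∀ j, star (χ j) ᵥ* H = (μ j : 𝕜) • star (χ j)) {v w : n → 𝕜}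
    (hχ' : ∀ k, (H + vecMulVec v w) *ᵥ χ' k = (ν k : 𝕜) • χ' k) (hwχ' : ∀ k, w ⬝ᵥ χ' k ≠ 0)
    (i : n) :
    ‖(w ⬝ᵥ χ i) * (star (χ i) ⬝ᵥ v)‖ =
      (∏ k, |ν k - μ i|) / ∏ k ∈ univ.erase i, |μ k - μ i| := by
  have hsum := fun k => sum_dotProduct_mul_div_sub_eq_one hχ hχH (hχ' k) (hwχ' k)
    fun j => sub_ne_zero.2 (by exact_mod_cast (hμν j k).symm)
  have h := mul_prod_erase_eq_of_forall_sum_div_eq _ _ _ _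
    (fun p q hpq => hν (RCLike.ofReal_injective hpq)) (fun k j => by exact_mod_cast (hμν j k).symm)
    hsum i
  have hne : ∏ k ∈ univ.erase i, |μ k - μ i| ≠ 0 :=
    prod_ne_zero_iff.2 fun k hk => abs_ne_zero.2 (sub_ne_zero.2 (hμ.ne (ne_of_mem_erase hk)))
  have hdist : ∀ s t : ℝ, ‖(s : 𝕜) - t‖ = |t - s| := fun s t => by
    rw [← RCLike.ofReal_sub, RCLike.norm_ofReal, abs_sub_comm]
  rw [eq_div_iff hne]
  simpa [norm_prod, hdist] using congrArg norm h

end RankOne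

theorem Matrix.IsHermitian.star_vecMul_eq_smul {𝕜 n : Type*} [RCLike 𝕜] [Fintype n]
    {H : Matrix n n 𝕜} (hH : H.IsHermitian) {x : n → 𝕜} {μ : ℝ} (hx : H *ᵥ x = (μ : 𝕜) • x) :
    star x ᵥ* H = (μ : 𝕜) • star x := by
  rw [← hH.eq, ← star_mulVec, hx, star_smul, RCLike.star_def, RCLike.conj_ofReal]

theorem IsCyclicVector.star_dotProduct_ne_zero {𝕜 n : Type*} [RCLike 𝕜] [Fintype n]
    [DecidableEq n] {H : Matrix n n 𝕜} {v : n → 𝕜} (hv : IsCyclicVector H v)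
    (hH : H.IsHermitian) {x : n → 𝕜} {μ : ℝ} (hx : H *ᵥ x = (μ : 𝕜) • x) (hx0 : x ≠ 0) :
    star v ⬝ᵥ x ≠ 0 := by
  rw [star_dotProduct, star_ne_zero]
  exact fun h => hx0 (star_eq_zero.1 (hv.eq_zero_of_vecMul_eq_smul (hH.star_vecMul_eq_smul hx) h))

theorem norm_sq_det_overlap_eq_prod {𝕜 n : Type*} [RCLike 𝕜] [Fintype n] [DecidableEq n]
    {A B : Matrix n n 𝕜} (hA : A.IsHermitian) {v : n → 𝕜} (hv : IsCyclicVector A v)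
    (hB : B = A + vecMulVec v (star v)) {a b : n → ℝ} {φ ψ : n → n → 𝕜}
    (hφ : ∀ j k, star (φ j) ⬝ᵥ φ k = if j = k then 1 else 0)
    (hψ : ∀ j k, star (ψ j) ⬝ᵥ ψ k = if j = k then 1 else 0)
    (hφA : ∀ j, A *ᵥ φ j = (a j : 𝕜) • φ j) (hψB : ∀ k, B *ᵥ ψ k = (b k : 𝕜) • ψ k)
    {N : ℕ} (e : Fin N ↪ n) :
    ‖det (of fun j k : Fin N => star (φ (e j)) ⬝ᵥ ψ (e k))‖ ^ 2 =
      ∏ i ∈ univ.map e, ∏ k ∈ (univ.map e)ᶜ,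
        |b k - a i| * |a k - b i| / (|a k - a i| * |b k - b i|) := by
  subst hB
  have hBH : (A + vecMulVec v (star v)).IsHermitian := by
    refine hA.add ?_
    ext i j; simp [vecMulVec_apply, mul_comm]
  have hvB := hv.add_vecMulVec (star v)
  have hφA' := fun j => hA.star_vecMul_eq_smul (hφA j)
  have hψB' := fun k => hBH.star_vecMul_eq_smul (hψB k)
  have hvφ : ∀ j, star v ⬝ᵥ φ j ≠ 0 := fun j =>
    hv.star_dotProduct_ne_zero hA (hφA j) fun h => by simpa [h] using hφ j j
  have hvψ : ∀ k, star v ⬝ᵥ ψ k ≠ 0 := fun k =>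
    hvB.star_dotProduct_ne_zero hBH (hψB k) fun h => by simpa [h] using hψ k k
  have hsec : ∀ j k, ((b k : 𝕜) - a j) * (star (φ j) ⬝ᵥ ψ k) =
      (star (φ j) ⬝ᵥ v) * (star v ⬝ᵥ ψ k) := fun j k =>
    sub_mul_dotProduct_of_add_vecMulVec (hφA' j) (hψB k)
  have hab : ∀ j k, a j ≠ b k := fun j k h => by
    have := hsec j k
    rw [h, sub_self, zero_mul, eq_comm, star_dotProduct (v := φ j)] at this
    exact mul_ne_zero (star_ne_zero.2 (hvφ j)) (hvψ k) this
  have ha : Function.Injective a := (hv.injective_of_vecMul_eq_smul hφ hφA').of_comp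
  have hb : Function.Injective b := (hvB.injective_of_vecMul_eq_smul hψ hψB').of_comp
  have hwA : ∀ i, ‖star (φ i) ⬝ᵥ v‖ ^ 2 =
      (∏ k, |b k - a i|) / ∏ k ∈ univ.erase i, |a k - a i| := fun i => by
    rw [← norm_dotProduct_mul_dotProduct_eq_prod_div_prod hφ ha hb hab hφA' hψB hvψ i, norm_mul,
      star_dotProduct (v := v), norm_star, sq]
  have hwB : ∀ i, ‖star v ⬝ᵥ ψ i‖ ^ 2 =
      (∏ k, |a k - b i|) / ∏ k ∈ univ.erase i, |b k - b i| := fun i => by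
    have hA' : A + vecMulVec v (star v) + vecMulVec v (-star v) = A := by
      rw [add_assoc, ← vecMulVec_add, add_neg_cancel, vecMulVec_zero, add_zero]
    rw [← norm_dotProduct_mul_dotProduct_eq_prod_div_prod hψ hb ha (fun j k => (hab k j).symm)
      hψB' (hA' ▸ hφA) (fun k => by rw [neg_dotProduct, neg_ne_zero]; exact hvφ k) i,
      neg_dotProduct, norm_mul, norm_neg, star_dotProduct (v := ψ i), norm_star, sq]
  have hentry : ∀ j k, star (φ j) ⬝ᵥ ψ k =
      -(star (φ j) ⬝ᵥ v) * (star v ⬝ᵥ ψ k) * ((a j : 𝕜) - b k)⁻¹ := fun j k => by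
    have hne : (a j : 𝕜) - b k ≠ 0 := sub_ne_zero.2 (by exact_mod_cast hab j k)
    field_simp
    linear_combination -hsec j k
  simp_rw [hentry]
  exact norm_sq_det_eq_prod_of_norm_sq_eq ha hb hab (c := fun j => -(star (φ j) ⬝ᵥ v))
    (fun i => by rw [norm_neg, hwA]) hwB e

theorem Fin.map_castLEEmb_univ {N M : ℕ} (h : N ≤ M) :
    univ.map (Fin.castLEEmb h) = univ.filter fun j : Fin M => (j : ℕ) < N := by
  ext j
  simp only [mem_map, mem_univ, true_and, mem_filter]
  exact ⟨fun ⟨i, hi⟩ => hi ▸ i.isLt, fun hj => ⟨⟨j, hj⟩, rfl⟩⟩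

theorem overlap_det_product_formula_general
    (M : ℕ)
    (A : Matrix (Fin M) (Fin M) ℂ) (hA : A.IsHermitian)
    (v : Fin M → ℂ)
    (hcyc : Submodule.span ℂ (Set.range fun k : Fin M => (A ^ (k : ℕ)) *ᵥ v) = ⊤)
    (B : Matrix (Fin M) (Fin M) ℂ) (hB : B = A + Matrix.vecMulVec v (star v))
    (a b : Fin M → ℝ)
    (φ ψ : Fin M → Fin M → ℂ)
    (hφortho : ∀ j k, star (φ j) ⬝ᵥ φ k = (if j = k then (1 : ℂ) else 0))
    (hψortho : ∀ j k, star (ψ j) ⬝ᵥ ψ k = (if j = k then (1 : ℂ) else 0))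
    (hφeig : ∀ j, A *ᵥ φ j = (a j : ℂ) • φ j)
    (hψeig : ∀ k, B *ᵥ ψ k = (b k : ℂ) • ψ k)
    (N : ℕ) (hNM : N ≤ M)
    (l m : Fin M → Fin M)
    (hlbij : Function.Bijective l) (hmbij : Function.Bijective m) :
    ‖Matrix.det (Matrix.of fun j k : Fin N =>
        star (φ (l (Fin.castLE hNM j))) ⬝ᵥ ψ (m (Fin.castLE hNM k)))‖ ^ 2 =
      ∏ j ∈ Finset.univ.filter (fun j : Fin M => (j : ℕ) < N),
        ∏ k ∈ Finset.univ.filter (fun k : Fin M => N ≤ (k : ℕ)),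
          (|b (m k) - a (l j)| * |a (l k) - b (m j)|) /
            (|a (l k) - a (l j)| * |b (m k) - b (m j)|) := by
  have h := norm_sq_det_overlap_eq_prod hA (isCyclicVector_of_span_fin_eq_top hcyc) hB
    (a := a ∘ l) (b := b ∘ m) (φ := φ ∘ l) (ψ := ψ ∘ m)
    (fun j k => by simpa [hlbij.1.eq_iff] using hφortho (l j) (l k))
    (fun j k => by simpa [hmbij.1.eq_iff] using hψortho (m j) (m k))
    (fun j => hφeig (l j)) (fun k => hψeig (m k)) (Fin.castLEEmb hNM)
  simp only [Fin.map_castLEEmb_univ, compl_filter, not_lt] at h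
  exact h

/-- **Product formula for the squared overlap determinant.** Let `B = A + v v*` with `v` cyclic
for the Hermitian matrix `A`, with ordered eigenvalues `a`, `b` and orthonormal eigenbases
`φ`, `ψ`. Let `N ≤ M`, let `l` (resp. `m`) be a bijection of the index set which is strictly
increasing on the first `N` indices, so that the first `N` values enumerate `J₁` (resp. `J₂`)
in increasing order and the remaining values enumerate the complement. Then
`|det (⟨φ_{l j}, ψ_{m k}⟩)_{j,k < N}|² =
  ∏_{j < N} ∏_{N ≤ k} (|b_{m k} - a_{l j}|·|a_{l k} - b_{m j}|)
    / (|a_{l k} - a_{l j}|·|b_{m k} - b_{m j}|)`. -/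
theorem overlap_det_product_formula
    (M : ℕ) (hM : 1 ≤ M)
    (A : Matrix (Fin M) (Fin M) ℂ) (hA : A.IsHermitian)
    (v : Fin M → ℂ)
    (hcyc : Submodule.span ℂ (Set.range fun k : Fin M => (A ^ (k : ℕ)) *ᵥ v) = ⊤)
    (B : Matrix (Fin M) (Fin M) ℂ) (hB : B = A + Matrix.vecMulVec v (star v))
    (a b : Fin M → ℝ) (hamono : Monotone a) (hbmono : Monotone b)
    (φ ψ : Fin M → Fin M → ℂ)
    (hφortho : ∀ j k, star (φ j) ⬝ᵥ φ k = (if j = k then (1 : ℂ) else 0))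
    (hψortho : ∀ j k, star (ψ j) ⬝ᵥ ψ k = (if j = k then (1 : ℂ) else 0))
    (hφeig : ∀ j, A *ᵥ φ j = (a j : ℂ) • φ j)
    (hψeig : ∀ k, B *ᵥ ψ k = (b k : ℂ) • ψ k)
    (N : ℕ) (hNM : N ≤ M)
    (l m : Fin M → Fin M)
    (hlbij : Function.Bijective l) (hmbij : Function.Bijective m)
    (hlmono : ∀ j k : Fin M, (j : ℕ) < N → (k : ℕ) < N → j < k → l j < l k)
    (hmmono : ∀ j k : Fin M, (j : ℕ) < N → (k : ℕ) < N → j < k → m j < m k) :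
    ‖Matrix.det (Matrix.of fun j k : Fin N =>
        star (φ (l (Fin.castLE hNM j))) ⬝ᵥ ψ (m (Fin.castLE hNM k)))‖ ^ 2 =
      ∏ j ∈ Finset.univ.filter (fun j : Fin M => (j : ℕ) < N),
        ∏ k ∈ Finset.univ.filter (fun k : Fin M => N ≤ (k : ℕ)),
          (|b (m k) - a (l j)| * |a (l k) - b (m j)|) /
            (|a (l k) - a (l j)| * |b (m k) - b (m j)|) :=
  overlap_det_product_formula_general M A hA v hcyc B hB a b φ ψ hφortho hψortho hφeig hψeig N hNM l
    m hlbij hmbij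
end

section
/- Vanishing of the determinant when the traces differ (finite-dimensional case): let P and Q be orthogonal projections on a finite-dimensional complex inner product space. If tr(P − Q) > 0 then det(1 − P(1 − Q)P) = 0, whereas if tr(P − Q) < 0 then det(1 − (1 − P)Q(1 − P)) = 0. In particular, tr(P − Q) ≠ 0 implies det(1 − (P − Q)²) = 0. -/
/-!
The trace of an idempotent is its rank, so `tr(P - Q) = rk P - rk Q`. If `rk Q < rk P`,
rank–nullity for `Q` gives `rk P + dim ker Q > dim V`, so `range P ∩ ker Q` contains some
`v ≠ 0`; then `Pv = v`, `Qv = 0`, and `v` lies in the kernels of `1 - P(1 - Q)P` and of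
`1 - (P - Q)²`. The case `rk P < rk Q` is symmetric, with a vector of `range Q ∩ ker P`.
-/

open Module LinearMap

section

variable {K V : Type*} [Field K] [AddCommGroup V] [Module K V] [FiniteDimensional K V]

theorem LinearMap.det_eq_zero_of_apply_eq_zero {f : V →ₗ[K] V} {v : V} (hv : v ≠ 0)
    (hfv : f v = 0) : f.det = 0 :=
  det_eq_zero_iff_ker_ne_bot.mpr <| (ker f).ne_bot_iff.mpr ⟨v, hfv, hv⟩

theorem IsIdempotentElem.exists_ne_zero_fixed_mem_ker_of_finrank_range_lt {P Q : Module.End K V}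
    (hP : IsIdempotentElem P) (h : finrank K (range Q) < finrank K (range P)) :
    ∃ v ≠ 0, P v = v ∧ Q v = 0 := by
  have hnullity := finrank_range_add_finrank_ker Q
  have hmeet : ¬ Disjoint (range P) (ker Q) := fun hdisj ↦ by
    have := Submodule.finrank_add_finrank_le_of_disjoint hdisj
    omega
  obtain ⟨v, hvP, hvQ, hv⟩ : ∃ v ∈ range P, v ∈ ker Q ∧ v ≠ 0 := by
    simpa only [Submodule.disjoint_def, not_forall, exists_prop] using hmeet
  exact ⟨v, hv, hP.isProj_range.map_id v hvP, hvQ⟩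

end

theorem det_vanishes_of_trace_ne_zero_general
    {V : Type*} [NormedAddCommGroup V] [InnerProductSpace ℂ V] [FiniteDimensional ℂ V]
    (P Q : V →ₗ[ℂ] V)
    (hP : P ∘ₗ P = P)
    (hQ : Q ∘ₗ Q = Q) :
    (0 < (LinearMap.trace ℂ V (P - Q)).re →
      LinearMap.det (1 - P ∘ₗ (1 - Q) ∘ₗ P) = 0) ∧
    ((LinearMap.trace ℂ V (P - Q)).re < 0 →
      LinearMap.det (1 - (1 - P) ∘ₗ Q ∘ₗ (1 - P)) = 0) ∧
    (LinearMap.trace ℂ V (P - Q) ≠ 0 →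
      LinearMap.det (1 - (P - Q) ∘ₗ (P - Q)) = 0) := by
  have hP' : IsIdempotentElem P := hP
  have hQ' : IsIdempotentElem Q := hQ
  have htr : trace ℂ V (P - Q) = (finrank ℂ (range P) : ℂ) - finrank ℂ (range Q) := by
    rw [map_sub, hP'.isProj_range.trace, hQ'.isProj_range.trace]
  simp only [htr, Complex.sub_re, Complex.natCast_re, sub_pos, sub_neg, ne_eq, sub_eq_zero,
    Nat.cast_inj, Nat.cast_lt]
  have hPQ := hP'.exists_ne_zero_fixed_mem_ker_of_finrank_range_lt (Q := Q)
  have hQP := hQ'.exists_ne_zero_fixed_mem_ker_of_finrank_range_lt (Q := P)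
  refine ⟨fun hlt ↦ ?_, fun hlt ↦ ?_, fun hne ↦ ?_⟩
  · obtain ⟨v, hv, hPv, hQv⟩ := hPQ hlt
    exact det_eq_zero_of_apply_eq_zero hv (by simp [hPv, hQv])
  · obtain ⟨w, hw, hQw, hPw⟩ := hQP hlt
    exact det_eq_zero_of_apply_eq_zero hw (by simp [hPw, hQw])
  · rcases Ne.lt_or_gt hne with hlt | hlt
    · obtain ⟨w, hw, hQw, hPw⟩ := hQP hlt
      exact det_eq_zero_of_apply_eq_zero hw (by simp [hPw, hQw])
    · obtain ⟨v, hv, hPv, hQv⟩ := hPQ hlt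
      exact det_eq_zero_of_apply_eq_zero hv (by simp [hPv, hQv])

/-- **Vanishing of the determinant when the traces differ (finite-dimensional case).**
Let `P`, `Q` be orthogonal projections on a finite-dimensional complex inner product space.
If `tr(P - Q) > 0` then `det(1 - P(1 - Q)P) = 0`; if `tr(P - Q) < 0` then
`det(1 - (1 - P)Q(1 - P)) = 0`. In particular `tr(P - Q) ≠ 0` implies
`det(1 - (P - Q)²) = 0`. -/
theorem det_vanishes_of_trace_ne_zero
    {V : Type*} [NormedAddCommGroup V] [InnerProductSpace ℂ V] [FiniteDimensional ℂ V]
    (P Q : V →ₗ[ℂ] V)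
    (hP : P ∘ₗ P = P) (hPsa : LinearMap.adjoint P = P)
    (hQ : Q ∘ₗ Q = Q) (hQsa : LinearMap.adjoint Q = Q) :
    (0 < (LinearMap.trace ℂ V (P - Q)).re →
      LinearMap.det (1 - P ∘ₗ (1 - Q) ∘ₗ P) = 0) ∧
    ((LinearMap.trace ℂ V (P - Q)).re < 0 →
      LinearMap.det (1 - (1 - P) ∘ₗ Q ∘ₗ (1 - P)) = 0) ∧
    (LinearMap.trace ℂ V (P - Q) ≠ 0 →
      LinearMap.det (1 - (P - Q) ∘ₗ (P - Q)) = 0) :=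
  det_vanishes_of_trace_ne_zero_general P Q hP hQ
end

section
/- Norm of the difference of projections via products: for any two orthogonal projections P and Q on a complex Hilbert space, ‖P − Q‖ ≤ max(‖P(1 − Q)P‖^{1/2}, ‖(1 − P)Q(1 − P)‖^{1/2}), where ‖·‖ is the operator norm. -/
open ContinuousLinearMap ComplexInnerProductSpace

/-- **Norm of the difference of projections via products.** For orthogonal projections
`P`, `Q` on a complex Hilbert space,
`‖P - Q‖ ≤ max (‖P(1-Q)P‖^{1/2}) (‖(1-P)Q(1-P)‖^{1/2})` in operator norm. -/
theorem norm_proj_diff_le_max_sqrt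
    {H : Type*} [NormedAddCommGroup H] [InnerProductSpace ℂ H] [CompleteSpace H]
    (P Q : H →L[ℂ] H)
    (hP : P ∘L P = P) (hPsa : IsSelfAdjoint P)
    (hQ : Q ∘L Q = Q) (hQsa : IsSelfAdjoint Q) :
    ‖P - Q‖ ≤ max (Real.sqrt ‖P ∘L (1 - Q) ∘L P‖) (Real.sqrt ‖(1 - P) ∘L Q ∘L (1 - P)‖) := by
  set A := P ∘L (1 - Q) with hA
  set B := (1 - P) ∘L Q with hB
  have hq : Q * Q = Q := hQ
  have hp : P * P = P := hP
  have hQ2 : (1 - Q) ∘L (1 - Q) = 1 - Q := by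
    show (1 - Q) * (1 - Q) = 1 - Q
    rw [sub_mul, mul_sub, mul_sub, one_mul, mul_one, hq]; abel
  have hQsa' : IsSelfAdjoint ((1 : H →L[ℂ] H) - Q) := (IsSelfAdjoint.one _).sub hQsa
  have hPsa' : IsSelfAdjoint ((1 : H →L[ℂ] H) - P) := (IsSelfAdjoint.one _).sub hPsa
  have hAstar : star A = (1 - Q) ∘L P := by
    rw [hA]
    show star (P * (1 - Q)) = _
    rw [star_mul, hQsa'.star_eq, hPsa.star_eq]; rfl
  have hBstar : star B = Q ∘L (1 - P) := by
    rw [hB]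
    show star ((1 - P) * Q) = _
    rw [star_mul, hQsa.star_eq, hPsa'.star_eq]; rfl
  have hnA : ‖P ∘L (1 - Q) ∘L P‖ = ‖A‖ ^ 2 := by
    have : P ∘L (1 - Q) ∘L P = A * star A := by
      rw [hAstar, hA]
      show _ = (P ∘L (1 - Q)) ∘L ((1 - Q) ∘L P)
      rw [comp_assoc, ← comp_assoc (1 - Q), hQ2]
    rw [this, CStarRing.norm_self_mul_star, sq]
  have hnB : ‖(1 - P) ∘L Q ∘L (1 - P)‖ = ‖B‖ ^ 2 := by
    have : (1 - P) ∘L Q ∘L (1 - P) = B * star B := by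
      rw [hBstar, hB]
      show _ = ((1 - P) ∘L Q) ∘L (Q ∘L (1 - P))
      rw [comp_assoc, ← comp_assoc Q, hQ]
    rw [this, CStarRing.norm_self_mul_star, sq]
  rw [hnA, hnB, Real.sqrt_sq (norm_nonneg A), Real.sqrt_sq (norm_nonneg B)]
  set M := max ‖A‖ ‖B‖ with hM
  have hM0 : 0 ≤ M := le_trans (norm_nonneg A) (le_max_left _ _)
  have hPinner : ∀ u v : H, ⟪P u, v⟫ = ⟪u, P v⟫ := fun u v => by
    rw [← ContinuousLinearMap.adjoint_inner_left, hPsa.adjoint_eq]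
  have hQinner : ∀ u v : H, ⟪Q u, v⟫ = ⟪u, Q v⟫ := fun u v => by
    rw [← ContinuousLinearMap.adjoint_inner_left, hQsa.adjoint_eq]
  have hP0 : P ∘L (1 - P) = 0 := by
    show P * (1 - P) = 0; rw [mul_sub, mul_one, hp, sub_self]
  have hQ0 : Q ∘L (1 - Q) = 0 := by
    show Q * (1 - Q) = 0; rw [mul_sub, mul_one, hq, sub_self]
  refine opNorm_le_bound _ hM0 fun x => ?_
  have hdec : (P - Q) x = A x + -(B x) := by
    have h : P - Q = A - B := by
      rw [hA, hB]
      show P - Q = P * (1 - Q) - (1 - P) * Q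
      rw [mul_sub, sub_mul, mul_one, one_mul]; abel
    rw [h]; simp [sub_eq_add_neg]
  have horth : ⟪A x, -(B x)⟫ = 0 := by
    rw [inner_neg_right]
    have e1 : A x = P ((1 - Q) x) := rfl
    have e2 : B x = (1 - P) (Q x) := rfl
    rw [e1, e2, hPinner]
    have : P ((1 - P) (Q x)) = (P ∘L (1 - P)) (Q x) := rfl
    rw [this, hP0]
    simp
  have hsq : ‖(P - Q) x‖ ^ 2 = ‖A x‖ ^ 2 + ‖B x‖ ^ 2 := by
    have := norm_add_sq_eq_norm_sq_add_norm_sq_of_inner_eq_zero _ _ horth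
    rw [hdec]
    simp only [norm_neg] at this ⊢
    rw [sq, sq, sq, this]
  have hxsq : ‖Q x‖ ^ 2 + ‖(1 - Q) x‖ ^ 2 = ‖x‖ ^ 2 := by
    have ho : ⟪Q x, (1 - Q) x⟫ = 0 := by
      rw [hQinner]
      have : Q ((1 - Q) x) = (Q ∘L (1 - Q)) x := rfl
      rw [this, hQ0]; simp
    have h2 := norm_add_sq_eq_norm_sq_add_norm_sq_of_inner_eq_zero _ _ ho
    have hx : Q x + (1 - Q) x = x := by simp
    rw [hx] at h2
    rw [sq, sq, sq, h2]
  have hAx : ‖A x‖ ≤ ‖A‖ * ‖(1 - Q) x‖ := by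
    have h : A ∘L (1 - Q) = A := by rw [hA, comp_assoc, hQ2]
    have e : A x = A ((1 - Q) x) := by
      conv_lhs => rw [← h]
      exact comp_apply A (1 - Q) x
    rw [e]; exact le_opNorm A _
  have hBx : ‖B x‖ ≤ ‖B‖ * ‖Q x‖ := by
    have h : B ∘L Q = B := by rw [hB, comp_assoc, hQ]
    have e : B x = B (Q x) := by
      conv_lhs => rw [← h]
      exact comp_apply B Q x
    rw [e]; exact le_opNorm B _
  have hAM : ‖A‖ ≤ M := le_max_left _ _
  have hBM : ‖B‖ ≤ M := le_max_right _ _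
  have h1 : ‖A x‖ ^ 2 ≤ M ^ 2 * ‖(1 - Q) x‖ ^ 2 := by
    have h' : ‖A x‖ ≤ M * ‖(1 - Q) x‖ :=
      hAx.trans (mul_le_mul_of_nonneg_right hAM (norm_nonneg _))
    calc ‖A x‖ ^ 2 ≤ (M * ‖(1 - Q) x‖) ^ 2 := pow_le_pow_left₀ (norm_nonneg _) h' 2
      _ = M ^ 2 * ‖(1 - Q) x‖ ^ 2 := mul_pow _ _ _
  have h2 : ‖B x‖ ^ 2 ≤ M ^ 2 * ‖Q x‖ ^ 2 := by
    have h' : ‖B x‖ ≤ M * ‖Q x‖ :=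
      hBx.trans (mul_le_mul_of_nonneg_right hBM (norm_nonneg _))
    calc ‖B x‖ ^ 2 ≤ (M * ‖Q x‖) ^ 2 := pow_le_pow_left₀ (norm_nonneg _) h' 2
      _ = M ^ 2 * ‖Q x‖ ^ 2 := mul_pow _ _ _
  have key : ‖(P - Q) x‖ ^ 2 ≤ (M * ‖x‖) ^ 2 := by
    have hfin : (M * ‖x‖) ^ 2 = M ^ 2 * ‖Q x‖ ^ 2 + M ^ 2 * ‖(1 - Q) x‖ ^ 2 := by
      rw [mul_pow, ← hxsq]; ring
    rw [hsq, hfin]; linarith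
  calc ‖(P - Q) x‖ = Real.sqrt (‖(P - Q) x‖ ^ 2) := (Real.sqrt_sq (norm_nonneg _)).symm
    _ ≤ Real.sqrt ((M * ‖x‖) ^ 2) := Real.sqrt_le_sqrt key
    _ = M * ‖x‖ := Real.sqrt_sq (by positivity)
end
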